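/- Let G be a finite directed graph with nonnegative edge weights containing a directed path P = p₀, …, p_{n-1} of total length 0, let m be an index, and let β ≥ 0 and ε ≥ 0. Let D be a set of pairs (a,b) of indices with b < m < a such that for each (a,b) ∈ D there is a walk in G from p_a to p_b of length at most β avoiding all vertices p_k with k < b. Assume additionally that every two crossing pairs of D good-cross: for all (a₁,b₁), (a₂,b₂) ∈ D with b₂ < b₁ < a₂ < a₁, there is a walk in G from p_{a₁} to p_{b₂} of length at most (1+ε)β avoiding all vertices p_k with k < b₂. Let H be the directed graph on {0, …, n-1} with edges k → k+1 for all k < n-1 and an edge a → b for every (a,b) ∈ D. If v < u are indices and there is a walk in H from u to v all of whose vertices are at least v, then there is a walk in G from p_u to p_v of length at most (1+ε)β avoiding all vertices p_k with k < v. -/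
import Mathlib


/-- A walk in the directed graph with edge relation `E`: a nonempty list of vertices
starting at `u`, ending at `v`, with every consecutive pair an edge. -/
def IsWalk {V : Type*} (E : V → V → Prop) (l : List V) (u v : V) : Prop :=
  l ≠ [] ∧ l.head? = some u ∧ l.getLast? = some v ∧ l.Chain' E

/-- The length of a walk: the sum of the weights of its consecutive pairs. -/
def walkLen {V : Type*} (w : V → V → ℝ) (l : List V) : ℝ :=
  ((l.zip l.tail).map fun q => w q.1 q.2).sum

lemma walkLen_cons' {V : Type*} (w : V → V → ℝ) {l : List V} {x : V}
    (h : l.head? = some x) (y : V) :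
    walkLen w (y :: l) = w y x + walkLen w l := by
  cases l with
  | nil => simp at h
  | cons a t =>
    simp only [List.head?_cons, Option.some.injEq] at h
    subst h
    rfl

lemma IsWalk.cons {V : Type*} {E : V → V → Prop} {l : List V} {x z y : V}
    (h : IsWalk E l x z) (he : E y x) : IsWalk E (y :: l) y z := by
  obtain ⟨hne, hh, hl, hc⟩ := h
  cases l with
  | nil => exact absurd rfl hne
  | cons a t =>
    simp only [List.head?_cons, Option.some.injEq] at hh
    subst hh
    refine ⟨by simp, by simp, ?_, ?_⟩
    · rwa [List.getLast?_cons_cons]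
    · exact List.isChain_cons_cons.mpr ⟨he, hc⟩

lemma prepend_path {V : Type*} (E : V → V → Prop) (w : V → V → ℝ) (n : ℕ) (p : ℕ → V)
    (hinj : ∀ i j, i < n → j < n → p i = p j → i = j)
    (hch : ∀ i, i + 1 < n → E (p i) (p (i + 1)))
    (hlen0 : ∀ i, i + 1 < n → w (p i) (p (i + 1)) = 0)
    (v : ℕ) (c : ℝ) :
    ∀ d a, a + d < n → v ≤ a → ∀ l z, IsWalk E l (p (a + d)) z → walkLen w l ≤ c →
      (∀ x ∈ l, ∀ k, k < v → x ≠ p k) →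
      ∃ l', IsWalk E l' (p a) z ∧ walkLen w l' ≤ c ∧ ∀ x ∈ l', ∀ k, k < v → x ≠ p k := by
  intro d
  induction d with
  | zero =>
    intro a h hva l z hwk hlen hav
    exact ⟨l, by simpa using hwk, hlen, hav⟩
  | succ d ih =>
    intro a h hva l z hwk hlen hav
    obtain ⟨l', hw', hlen', hav'⟩ := ih (a + 1) (by omega) (by omega) l z
      (by rw [show a + 1 + d = a + (d + 1) by omega]; exact hwk) hlen hav
    have hh' : l'.head? = some (p (a + 1)) := hw'.2.1
    refine ⟨p a :: l', hw'.cons (hch a (by omega)), ?_, ?_⟩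
    · rw [walkLen_cons' w hh', hlen0 a (by omega)]
      linarith
    · intro x hx k hk
      rcases List.mem_cons.mp hx with rfl | hx
      · intro hpe
        have := hinj a k (by omega) (by omega) hpe
        omega
      · exact hav' x hx k hk

lemma last_detour {n : ℕ} {H : ℕ → ℕ → Prop} {D : Set (ℕ × ℕ)}
    (hH : ∀ x y, H x y → (x + 1 < n ∧ y = x + 1) ∨ (x, y) ∈ D) :
    ∀ l (x v : ℕ), IsWalk H l x v → (∀ z ∈ l, v ≤ z) → x ≠ v → ∃ a, (a, v) ∈ D := by
  intro l
  induction l with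
  | nil => intro x v h _ _; exact absurd rfl h.1
  | cons a t ih =>
    intro x v h hz hxv
    have hax : a = x := by
      have := h.2.1; simp only [List.head?_cons, Option.some.injEq] at this; exact this
    cases t with
    | nil =>
      exfalso
      have := h.2.2.1
      simp only [List.getLast?_singleton, Option.some.injEq] at this
      exact hxv (hax ▸ this : x = v)
    | cons b t2 =>
      have hc := List.isChain_cons_cons.mp h.2.2.2
      have hwalk : IsWalk H (b :: t2) b v := by
        refine ⟨by simp, by simp, ?_, hc.2⟩
        have := h.2.2.1
        rwa [List.getLast?_cons_cons] at this
      by_cases hbv : b = v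
      · subst hbv
        rcases hH a b hc.1 with ⟨_, hfw⟩ | hd
        · have hva : b ≤ a := hz a (by simp)
          omega
        · exact ⟨a, hd⟩
      · exact ih b v hwalk (fun z hzz => hz z (by simp [hzz])) hbv

lemma first_detour {n : ℕ} {H : ℕ → ℕ → Prop} {D : Set (ℕ × ℕ)}
    (hH : ∀ x y, H x y → (x + 1 < n ∧ y = x + 1) ∨ (x, y) ∈ D) :
    ∀ l (x v : ℕ), IsWalk H l x v → v < x → ∃ a b, (a, b) ∈ D ∧ x ≤ a ∧ b ∈ l := by
  intro l
  induction l with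
  | nil => intro x v h _; exact absurd rfl h.1
  | cons a t ih =>
    intro x v h hvx
    have hax : a = x := by
      have := h.2.1; simp only [List.head?_cons, Option.some.injEq] at this; exact this
    subst hax
    cases t with
    | nil =>
      exfalso
      have := h.2.2.1
      simp only [List.getLast?_singleton, Option.some.injEq] at this
      omega
    | cons b t2 =>
      have hc := List.isChain_cons_cons.mp h.2.2.2
      have hwalk : IsWalk H (b :: t2) b v := by
        refine ⟨by simp, by simp, ?_, hc.2⟩
        have := h.2.2.1
        rwa [List.getLast?_cons_cons] at this
      rcases hH a b hc.1 with ⟨_, hfw⟩ | hd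
      · subst hfw
        obtain ⟨a₁, b₁, hD1, hle, hmem⟩ := ih (a + 1) v hwalk (by omega)
        exact ⟨a₁, b₁, hD1, by omega, by simp [List.mem_cons.mp hmem]⟩
      · exact ⟨a, b, hd, le_refl a, by simp⟩

/-- Like STATEMENT 11, but assuming additionally that crossing detour
pairs good-cross (a walk of length at most `(1+ε)β` realizes the combined detour),
the conclusion improves to a walk of length at most `(1+ε)β`. -/
theorem stmt_12 {V : Type*} [Fintype V] (E : V → V → Prop) (w : V → V → ℝ)
    (hw : ∀ x y, 0 ≤ w x y) (n : ℕ) (hn : 0 < n) (p : ℕ → V)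
    (hinj : ∀ i j, i < n → j < n → p i = p j → i = j)
    (hch : ∀ i, i + 1 < n → E (p i) (p (i + 1)))
    (hlen0 : ∀ i, i + 1 < n → w (p i) (p (i + 1)) = 0)
    (m : ℕ) (hm : m < n) (β ε : ℝ) (hβ : 0 ≤ β) (hε : 0 ≤ ε)
    (D : Set (ℕ × ℕ)) (hD : ∀ q ∈ D, q.2 < m ∧ m < q.1 ∧ q.1 < n)
    (hDwalk : ∀ q ∈ D, ∃ l, IsWalk E l (p q.1) (p q.2) ∧ walkLen w l ≤ β ∧
      ∀ x ∈ l, ∀ k, k < q.2 → x ≠ p k)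
    (hgood : ∀ q₁ q₂, q₁ ∈ D → q₂ ∈ D →
      q₂.2 < q₁.2 → q₁.2 < q₂.1 → q₂.1 < q₁.1 →
      ∃ l, IsWalk E l (p q₁.1) (p q₂.2) ∧ walkLen w l ≤ (1 + ε) * β ∧
        ∀ x ∈ l, ∀ k, k < q₂.2 → x ≠ p k) :
    let H : ℕ → ℕ → Prop := fun a c => (a + 1 < n ∧ c = a + 1) ∨ (a, c) ∈ D
    ∀ u v : ℕ, v < u → u < n →
      (∃ l, IsWalk H l u v ∧ ∀ x ∈ l, v ≤ x) →
      ∃ l, IsWalk E l (p u) (p v) ∧ walkLen w l ≤ (1 + ε) * β ∧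
        ∀ x ∈ l, ∀ k, k < v → x ≠ p k := by
  intro H u v hvu hun hex
  obtain ⟨l, hl, hmem⟩ := hex
  have hH : ∀ x y, H x y → (x + 1 < n ∧ y = x + 1) ∨ (x, y) ∈ D := fun x y h => h
  obtain ⟨a₂, ha₂⟩ := last_detour hH l u v hl hmem (by omega)
  obtain ⟨a₁, b₁, hq₁, hua₁, hb₁l⟩ := first_detour hH l u v hl hvu
  have hb₁v : v ≤ b₁ := hmem b₁ hb₁l
  obtain ⟨hb₁m, hma₁, ha₁n⟩ := hD (a₁, b₁) hq₁
  obtain ⟨hvm, hma₂, ha₂n⟩ := hD (a₂, v) ha₂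
  have hββ : β ≤ (1 + ε) * β := by nlinarith
  by_cases h2 : u ≤ a₂
  · obtain ⟨l₂, hw₂, hlen₂, hav₂⟩ := hDwalk (a₂, v) ha₂
    obtain ⟨l', h1, h2', h3⟩ := prepend_path E w n p hinj hch hlen0 v β (a₂ - u) u
      (by omega) (by omega) l₂ (p v)
      (by rw [show u + (a₂ - u) = a₂ by omega]; exact hw₂) hlen₂ hav₂
    exact ⟨l', h1, le_trans h2' hββ, h3⟩
  · by_cases hbv : b₁ = v
    · subst hbv
      obtain ⟨l₂, hw₂, hlen₂, hav₂⟩ := hDwalk (a₁, b₁) hq₁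
      obtain ⟨l', h1, h2', h3⟩ := prepend_path E w n p hinj hch hlen0 b₁ β (a₁ - u) u
        (by omega) (by omega) l₂ (p b₁)
        (by rw [show u + (a₁ - u) = a₁ by omega]; exact hw₂) hlen₂ hav₂
      exact ⟨l', h1, le_trans h2' hββ, h3⟩
    · obtain ⟨l₂, hw₂, hlen₂, hav₂⟩ := hgood (a₁, b₁) (a₂, v) hq₁ ha₂
        (by show v < b₁; omega) (by show b₁ < a₂; omega) (by show a₂ < a₁; omega)
      obtain ⟨l', h1, h2', h3⟩ := prepend_path E w n p hinj hch hlen0 v ((1 + ε) * β)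
        (a₁ - u) u (by omega) (by omega) l₂ (p v)
        (by rw [show u + (a₁ - u) = a₁ by omega]; exact hw₂) hlen₂ hav₂
      exact ⟨l', h1, h2', h3⟩
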